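/- arXiv:1503.02774 — 2 statements merged into one kernel-verified Lean document; each statement's English description precedes it below -/
import Mathlib

section
/- Let G be a finite connected graph satisfying the weak cut property for fault family 𝒟: for every minimal vertex cut C of G and all A, B with A ∪ B = C, not both A and B are contained in some member of 𝒟. Then for any F₁, F₂ ∈ 𝒟, the graph G \ (F₁ ∪ F₂) is connected (assuming it is nonempty). -/
/-- `C` is a vertex cut of `G`: the induced subgraph on the complement of `C`
is not preconnected (i.e. removing `C` disconnects the graph). -/
def IsVertexCut {V : Type*} (G : SimpleGraph V) (C : Set V) : Prop :=
  ¬ (G.induce Cᶜ).Preconnected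

/-- `C` is a minimal vertex cut of `G`. -/
def IsMinVertexCut {V : Type*} (G : SimpleGraph V) (C : Set V) : Prop :=
  IsVertexCut G C ∧ ∀ C' ⊂ C, ¬ IsVertexCut G C'

/-- The weak cut property for a family `𝒟` of possible fault sets. -/
def WeakCutProperty {V : Type*} (G : SimpleGraph V) (𝒟 : Set (Set V)) : Prop :=
  ∀ C : Set V, IsMinVertexCut G C → ∀ A B : Set V, A ∪ B = C →
    (¬ ∃ D ∈ 𝒟, A ⊆ D) ∨ (¬ ∃ D ∈ 𝒟, B ⊆ D)

/-- Vertex connectivity: minimum cardinality of a vertex cut. -/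
noncomputable def vertexConnectivity {V : Type*} (G : SimpleGraph V) : ℕ :=
  sInf {n | ∃ C : Set V, IsVertexCut G C ∧ C.ncard = n}

/-- If the connected graph `G` satisfies the weak cut property for
`𝒟`, then for any `F₁, F₂ ∈ 𝒟` the graph `G \ (F₁ ∪ F₂)` is connected
(assuming it is nonempty). -/
theorem stmt_6 {V : Type*} [Fintype V] (G : SimpleGraph V) (hconn : G.Connected)
    (𝒟 : Set (Set V)) (hwcp : WeakCutProperty G 𝒟)
    (F₁ F₂ : Set V) (hF₁ : F₁ ∈ 𝒟) (hF₂ : F₂ ∈ 𝒟)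
    (hne : ((F₁ ∪ F₂)ᶜ : Set V).Nonempty) :
    (G.induce ((F₁ ∪ F₂)ᶜ : Set V)).Connected := by
  rw [SimpleGraph.connected_iff]
  refine ⟨?_, hne.to_subtype⟩
  by_contra hpre
  -- F₁ ∪ F₂ is a vertex cut
  have hcut : IsVertexCut G (F₁ ∪ F₂) := by
    unfold IsVertexCut
    exact hpre
  -- find a minimal vertex cut contained in F₁ ∪ F₂
  have hwf : WellFoundedLT (Set V) := inferInstance
  obtain ⟨C, ⟨hCcut, hCsub⟩, hmin⟩ :=
    hwf.wf.has_min {C | IsVertexCut G C ∧ C ⊆ F₁ ∪ F₂} ⟨F₁ ∪ F₂, hcut, subset_rfl⟩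
  have hCmin : IsMinVertexCut G C := by
    refine ⟨hCcut, fun C' hC' hC'cut => ?_⟩
    exact hmin C' ⟨hC'cut, hC'.subset.trans hCsub⟩ hC'
  have := hwcp C hCmin (C ∩ F₁) (C \ F₁) (by
    rw [Set.inter_union_diff])
  rcases this with h | h
  · exact h ⟨F₁, hF₁, Set.inter_subset_right⟩
  · refine h ⟨F₂, hF₂, fun x hx => ?_⟩
    rcases hCsub hx.1 with h1 | h2
    · exact absurd h1 hx.2
    · exact h2
end

section
/- Let G be a finite connected graph satisfying the weak cut property for fault family 𝒟, and let F ∈ 𝒟. Then for any two vertices u, v ∉ F, there is a path from u to v in G avoiding all vertices of F ∪ F' for any fixed F' ∈ 𝒟 with u, v ∉ F', i.e., u and v are connected in G \ (F ∪ F'). -/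
/-- If the connected graph `G` has the weak cut property for `𝒟`,
`F, F' ∈ 𝒟` and `u, v ∉ F ∪ F'`, then `u` and `v` are connected in
`G \ (F ∪ F')`. -/
theorem stmt_13 {V : Type*} [Fintype V] (G : SimpleGraph V) (hconn : G.Connected)
    (𝒟 : Set (Set V)) (hwcp : WeakCutProperty G 𝒟)
    (F F' : Set V) (hF : F ∈ 𝒟) (hF' : F' ∈ 𝒟)
    (u v : V) (hu : u ∈ ((F ∪ F')ᶜ : Set V)) (hv : v ∈ ((F ∪ F')ᶜ : Set V)) :
    (G.induce ((F ∪ F')ᶜ : Set V)).Reachable ⟨u, hu⟩ ⟨v, hv⟩ := by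
  by_contra h
  have hcut : IsVertexCut G (F ∪ F') := fun pre => h (pre ⟨u, hu⟩ ⟨v, hv⟩)
  -- extract a minimal vertex cut inside F ∪ F'
  have key : ∀ n : ℕ, ∀ S : Set V, S.ncard ≤ n → IsVertexCut G S →
      ∃ C, C ⊆ S ∧ IsMinVertexCut G C := by
    intro n
    induction n with
    | zero =>
      intro S hS hP
      refine ⟨S, subset_rfl, hP, fun C' hC' _ => ?_⟩
      have hSe : S = ∅ := (Set.ncard_eq_zero (Set.toFinite S)).mp (Nat.le_zero.mp hS)
      subst hSe
      exact (hC'.2 (Set.empty_subset _)).elim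
    | succ n ih =>
      intro S hS hP
      by_cases hex : ∃ C', C' ⊂ S ∧ IsVertexCut G C'
      · obtain ⟨C', hsub, hP'⟩ := hex
        have hlt : C'.ncard < S.ncard := Set.ncard_lt_ncard hsub (Set.toFinite S)
        obtain ⟨C, hCsub, hC⟩ := ih C' (by omega) hP'
        exact ⟨C, hCsub.trans hsub.subset, hC⟩
      · exact ⟨S, subset_rfl, hP, fun C' h1 h2 => hex ⟨C', h1, h2⟩⟩
  obtain ⟨C, hCsub, hCmin⟩ := key (F ∪ F').ncard (F ∪ F') le_rfl hcut
  rcases hwcp C hCmin (C ∩ F) (C \ F) (Set.inter_union_diff C F) with hA | hB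
  · exact hA ⟨F, hF, Set.inter_subset_right⟩
  · refine hB ⟨F', hF', fun x hx => ?_⟩
    rcases hCsub hx.1 with hxF | hxF'
    · exact absurd hxF hx.2
    · exact hxF'
end
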